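/- arXiv:0810.4632 — 2 statements merged into one kernel-verified Lean document; each statement's English description precedes it below -/
import Mathlib

section
/- Let X be a synchronized system and φ : X → Y an open code to a shift space Y. Then φ is bi-continuing almost everywhere. -/
open Set Filter

/-- The product topology on `ℤ → A`, where the alphabet `A` carries the
discrete topology. -/
def seqTop (A : Type*) : TopologicalSpace (ℤ → A) :=
  @Pi.topologicalSpace ℤ (fun _ => A) (fun _ => ⊥)

/-- The shift map `σ`, defined by `σ(x)_i = x_{i+1}`. -/
def shiftMap {A : Type*} (x : ℤ → A) : ℤ → A := fun i => x (i + 1)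

/-- A shift space: a nonempty, closed, shift-invariant subset of `A^ℤ`. -/
def IsShiftSpace {A : Type*} (X : Set (ℤ → A)) : Prop :=
  X.Nonempty ∧ @IsClosed _ (seqTop A) X ∧ shiftMap '' X = X

/-- The word `u` occurs in `x` at coordinate `i`. -/
def OccursAt {A : Type*} (x : ℤ → A) (u : List A) (i : ℤ) : Prop :=
  ∀ k : Fin u.length, x (i + ((k : ℕ) : ℤ)) = u.get k

/-- `u` is a word of the language `B(X)` of `X`. -/
def IsWordOf {A : Type*} (X : Set (ℤ → A)) (u : List A) : Prop :=
  ∃ x ∈ X, OccursAt x u 0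

/-- A shift of finite type: a shift space defined by finitely many
forbidden words. -/
def IsSFT {A : Type*} (X : Set (ℤ → A)) : Prop :=
  IsShiftSpace X ∧ ∃ F : Finset (List A),
    X = { x | ∀ u ∈ F, ∀ i : ℤ, ¬ OccursAt x u i }

/-- A code: a continuous shift-commuting map from `X` to `Y`. -/
def IsCode {A B : Type*} (X : Set (ℤ → A)) (Y : Set (ℤ → B))
    (φ : (ℤ → A) → (ℤ → B)) : Prop :=
  Set.MapsTo φ X Y ∧ @ContinuousOn _ _ (seqTop A) (seqTop B) φ X ∧
    ∀ x ∈ X, φ (shiftMap x) = shiftMap (φ x)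

/-- A factor code: a surjective code. -/
def IsFactorCode {A B : Type*} (X : Set (ℤ → A)) (Y : Set (ℤ → B))
    (φ : (ℤ → A) → (ℤ → B)) : Prop :=
  IsCode X Y φ ∧ Y ⊆ φ '' X

/-- A code is open if it maps (relatively) open subsets of `X` to
(relatively) open subsets of `Y`. -/
def IsOpenCode {A B : Type*} (X : Set (ℤ → A)) (Y : Set (ℤ → B))
    (φ : (ℤ → A) → (ℤ → B)) : Prop :=
  ∀ U : Set (ℤ → A), @IsOpen _ (seqTop A) U →
    ∃ V : Set (ℤ → B), @IsOpen _ (seqTop B) V ∧ φ '' (X ∩ U) = Y ∩ V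

/-- A code has a uniform lifting length `l`. -/
def HasUniformLiftingLength {A B : Type*} (X : Set (ℤ → A)) (Y : Set (ℤ → B))
    (φ : (ℤ → A) → (ℤ → B)) : Prop :=
  ∃ l : ℕ, ∀ k : ℕ, ∀ x ∈ X, ∀ y ∈ Y,
    (∀ i : ℤ, |i| ≤ (k : ℤ) + (l : ℤ) → φ x i = y i) →
    ∃ x' ∈ X, (∀ i : ℤ, |i| ≤ (k : ℤ) → x' i = x i) ∧ φ x' = y

/-- Right continuing code. -/
def IsRightContinuing {A B : Type*} (X : Set (ℤ → A)) (Y : Set (ℤ → B))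
    (φ : (ℤ → A) → (ℤ → B)) : Prop :=
  ∀ x ∈ X, ∀ y ∈ Y, (∃ M : ℤ, ∀ i ≤ M, φ x i = y i) →
    ∃ x' ∈ X, (∃ M : ℤ, ∀ i ≤ M, x' i = x i) ∧ φ x' = y

/-- Left continuing code. -/
def IsLeftContinuing {A B : Type*} (X : Set (ℤ → A)) (Y : Set (ℤ → B))
    (φ : (ℤ → A) → (ℤ → B)) : Prop :=
  ∀ x ∈ X, ∀ y ∈ Y, (∃ M : ℤ, ∀ i, M ≤ i → φ x i = y i) →
    ∃ x' ∈ X, (∃ M : ℤ, ∀ i, M ≤ i → x' i = x i) ∧ φ x' = y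

/-- `n` is a right continuing retract of `φ`. -/
def IsRightRetract {A B : Type*} (X : Set (ℤ → A)) (Y : Set (ℤ → B))
    (φ : (ℤ → A) → (ℤ → B)) (n : ℕ) : Prop :=
  ∀ x ∈ X, ∀ y ∈ Y, (∀ i : ℤ, i ≤ 0 → φ x i = y i) →
    ∃ x' ∈ X, φ x' = y ∧ ∀ i : ℤ, i ≤ -(n : ℤ) → x' i = x i

/-- `n` is a left continuing retract of `φ`. -/
def IsLeftRetract {A B : Type*} (X : Set (ℤ → A)) (Y : Set (ℤ → B))
    (φ : (ℤ → A) → (ℤ → B)) (n : ℕ) : Prop :=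
  ∀ x ∈ X, ∀ y ∈ Y, (∀ i : ℤ, 0 ≤ i → φ x i = y i) →
    ∃ x' ∈ X, φ x' = y ∧ ∀ i : ℤ, (n : ℤ) ≤ i → x' i = x i

/-- Right closing code. -/
def IsRightClosing {A B : Type*} (X : Set (ℤ → A))
    (φ : (ℤ → A) → (ℤ → B)) : Prop :=
  ∀ x ∈ X, ∀ x' ∈ X, (∃ M : ℤ, ∀ i ≤ M, x i = x' i) → φ x = φ x' → x = x'

/-- Left closing code. -/
def IsLeftClosing {A B : Type*} (X : Set (ℤ → A))
    (φ : (ℤ → A) → (ℤ → B)) : Prop :=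
  ∀ x ∈ X, ∀ x' ∈ X, (∃ M : ℤ, ∀ i, M ≤ i → x i = x' i) → φ x = φ x' → x = x'

/-- A sofic shift: a factor of a shift of finite type. -/
def IsSofic {B : Type*} (Y : Set (ℤ → B)) : Prop :=
  ∃ (C : Type) (_ : Fintype C) (Z : Set (ℤ → C)) (π : (ℤ → C) → (ℤ → B)),
    IsSFT Z ∧ IsFactorCode Z Y π

/-- Irreducibility of a shift space. -/
def IsIrreducibleShift {A : Type*} (X : Set (ℤ → A)) : Prop :=
  ∀ u v : List A, IsWordOf X u → IsWordOf X v →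
    ∃ w : List A, IsWordOf X (u ++ w ++ v)

/-- Mixing shift space. -/
def IsMixingShift {A : Type*} (X : Set (ℤ → A)) : Prop :=
  ∀ u v : List A, IsWordOf X u → IsWordOf X v →
    ∃ N : ℕ, ∀ n : ℕ, N ≤ n →
      ∃ w : List A, w.length = n ∧ IsWordOf X (u ++ w ++ v)

/-- The almost specification property. -/
def AlmostSpecified {A : Type*} (X : Set (ℤ → A)) : Prop :=
  ∃ N : ℕ, ∀ u v : List A, IsWordOf X u → IsWordOf X v →
    ∃ w : List A, w.length ≤ N ∧ IsWordOf X (u ++ w ++ v)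

/-- The specification property. -/
def HasSpecification {A : Type*} (X : Set (ℤ → A)) : Prop :=
  ∃ N : ℕ, ∀ u v : List A, IsWordOf X u → IsWordOf X v →
    ∃ w : List A, w.length = N ∧ IsWordOf X (u ++ w ++ v)

/-- A synchronizing word of `X`. -/
def IsSynchronizingWord {A : Type*} (X : Set (ℤ → A)) (v : List A) : Prop :=
  IsWordOf X v ∧ ∀ u w : List A, IsWordOf X (u ++ v) → IsWordOf X (v ++ w) →
    IsWordOf X (u ++ v ++ w)

/-- A synchronized system: an irreducible shift space with a synchronizing
word. -/
def IsSynchronizedSystem {A : Type*} (X : Set (ℤ → A)) : Prop :=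
  IsIrreducibleShift X ∧ ∃ v : List A, IsSynchronizingWord X v

/-- A subshift of `X`. -/
def IsSubshiftOf {A : Type*} (X' X : Set (ℤ → A)) : Prop :=
  IsShiftSpace X' ∧ X' ⊆ X

/-- The number of words of length `n` in the language of `X`. -/
noncomputable def wordCount {A : Type*} (X : Set (ℤ → A)) (n : ℕ) : ℕ :=
  Set.ncard { u : List A | u.length = n ∧ IsWordOf X u }

/-- The entropy `h(X) = lim (1/n) log |B_n(X)|` of a shift space (the limit
exists by subadditivity, hence equals the limsup used here). -/
noncomputable def entropy {A : Type*} (X : Set (ℤ → A)) : ℝ :=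
  Filter.limsup (fun n : ℕ => Real.log (wordCount X n) / (n : ℝ)) Filter.atTop

/-- The periodic condition `P(X) ↘ P(Y)`. -/
def PeriodicCondition {A B : Type*} (X : Set (ℤ → A)) (Y : Set (ℤ → B)) : Prop :=
  ∀ n : ℕ, 0 < n → (∃ x ∈ X, shiftMap^[n] x = x) → ∃ y ∈ Y, shiftMap^[n] y = y

/-- A cyclic cover `D_0, …, D_{p-1}` of a shift space `X`. -/
def IsCyclicCover {A : Type*} (X : Set (ℤ → A)) (p : ℕ)
    (D : ZMod p → Set (ℤ → A)) : Prop :=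
  0 < p ∧
  (∀ i, @IsClosed _ (seqTop A) (D i) ∧ D i ⊆ X) ∧
  (⋃ i, D i) = X ∧
  (∀ i, shiftMap '' D i = D (i + 1)) ∧
  (∀ i, ∀ U V : Set (ℤ → A), @IsOpen _ (seqTop A) U → @IsOpen _ (seqTop A) V →
    (D i ∩ U).Nonempty → (D i ∩ V).Nonempty →
    ∃ N : ℕ, ∀ n : ℕ, N ≤ n →
      ((shiftMap^[p * n] '' (D i ∩ U)) ∩ (D i ∩ V)).Nonempty) ∧
  (∀ i j, i ≠ j → ∀ U : Set (ℤ → A), @IsOpen _ (seqTop A) U →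
    X ∩ U ⊆ D i ∩ D j → X ∩ U = ∅)

/-- A left ray of `X`, recorded as `z : ℕ → A` where `z n` is the symbol at
coordinate `-(n+1)`. -/
def IsLeftRay {A : Type*} (X : Set (ℤ → A)) (z : ℕ → A) : Prop :=
  ∃ x ∈ X, ∀ n : ℕ, x (-((n : ℤ) + 1)) = z n

/-- Append the finite word `w` on the right of a left-infinite sequence `z`
(the last symbol of `w` ends up at coordinate `-1`). -/
def rayAppend {A : Type*} (z : ℕ → A) (w : List A) : ℕ → A :=
  fun n => if h : n < w.length then w.reverse.get ⟨n, by simpa using h⟩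
           else z (n - w.length)

/-- A left transitive point: every word of `X` occurs in `x_{(-∞,0]}`. -/
def IsLeftTransitive {A : Type*} (X : Set (ℤ → A)) (x : ℤ → A) : Prop :=
  ∀ u : List A, IsWordOf X u → ∃ i : ℤ, i + (u.length : ℤ) ≤ 1 ∧ OccursAt x u i

/-- A right transitive point: every word of `X` occurs in `x_{[0,∞)}`. -/
def IsRightTransitive {A : Type*} (X : Set (ℤ → A)) (x : ℤ → A) : Prop :=
  ∀ u : List A, IsWordOf X u → ∃ i : ℤ, 0 ≤ i ∧ OccursAt x u i

/-- Right continuing almost everywhere. -/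
def IsRightContinuingAE {A B : Type*} (X : Set (ℤ → A)) (Y : Set (ℤ → B))
    (φ : (ℤ → A) → (ℤ → B)) : Prop :=
  ∀ x ∈ X, IsLeftTransitive X x → ∀ y ∈ Y, (∃ M : ℤ, ∀ i ≤ M, φ x i = y i) →
    ∃ x' ∈ X, (∃ M : ℤ, ∀ i ≤ M, x' i = x i) ∧ φ x' = y

/-- Left continuing almost everywhere. -/
def IsLeftContinuingAE {A B : Type*} (X : Set (ℤ → A)) (Y : Set (ℤ → B))
    (φ : (ℤ → A) → (ℤ → B)) : Prop :=
  ∀ x ∈ X, IsRightTransitive X x → ∀ y ∈ Y, (∃ M : ℤ, ∀ i, M ≤ i → φ x i = y i) →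
    ∃ x' ∈ X, (∃ M : ℤ, ∀ i, M ≤ i → x' i = x i) ∧ φ x' = y

/-- The bi-infinite concatenations of blocks `1 0^s`, `s ∈ S`: the positions of
`1`s in `x` form the range of a strictly monotone `t : ℤ → ℤ` whose
consecutive gaps `t (n+1) - t n` all equal `s + 1` for some `s ∈ S`. -/
def GapConcat (S : Set ℕ) : Set (ℤ → Bool) :=
  { x | ∃ t : ℤ → ℤ, StrictMono t ∧ (∀ n : ℤ, ∃ s ∈ S, t (n + 1) = t n + (s : ℤ) + 1) ∧
      (∀ i : ℤ, x i = true ↔ ∃ n : ℤ, t n = i) }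

/-- The `S`-gap shift: the smallest shift space over `{0,1}` containing all
bi-infinite concatenations of blocks from `{1 0^s : s ∈ S}`. -/
def SGapShift (S : Set ℕ) : Set (ℤ → Bool) :=
  ⋂₀ { X : Set (ℤ → Bool) | IsShiftSpace X ∧ GapConcat S ⊆ X }

/-!
A code is a sliding block code of some radius `r`, and openness makes lifting uniform along the
shift: for every word `P` there is an `m` such that each point of `Y` that agrees with `φ x` on
`[t - m, t + m]`, where `P` occurs in `x` at `t`, is the image of a point in which `P` still
occurs at `t`. Take for `P` a synchronizing word padded by `r` symbols on both sides. A left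
transitive `x` contains `P` arbitrarily far to the left, in particular left of the coordinates
where `y` may differ from `φ x`. Lift `y` to `z` keeping `P` and splice `x` (on the left) with `z`
(on the right) across the synchronizing word; thanks to the padding the image of the splice is
`φ x` on the left and `φ z = y` on the right. The left continuing property is the mirror
image.
-/

section Shift

variable {A B : Type*}

def shiftBy (k : ℤ) (x : ℤ → A) : ℤ → A := fun i => x (i + k)

@[simp] lemma shiftBy_apply (k : ℤ) (x : ℤ → A) (i : ℤ) : shiftBy k x i = x (i + k) := rfl

lemma shiftBy_one : (shiftBy 1 : (ℤ → A) → ℤ → A) = shiftMap := rfl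

lemma shiftBy_shiftBy (k l : ℤ) (x : ℤ → A) : shiftBy k (shiftBy l x) = shiftBy (k + l) x := by
  funext i; simp [add_assoc]

@[simp] lemma shiftBy_zero (x : ℤ → A) : shiftBy 0 x = x := by funext i; simp

lemma shiftBy_add_one (k : ℤ) (x : ℤ → A) : shiftBy (k + 1) x = shiftMap (shiftBy k x) := by
  rw [← shiftBy_one, shiftBy_shiftBy, add_comm]

lemma shiftMap_injective : Function.Injective (shiftMap : (ℤ → A) → ℤ → A) := fun x y h => by
  funext i; simpa [shiftMap] using congrFun h (i - 1)

lemma Int.forall_of_iff_add_one {P : ℤ → Prop} (h0 : P 0) (h : ∀ k, P k ↔ P (k + 1)) (k : ℤ) :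
    P k := by
  induction k using Int.induction_on with
  | zero => exact h0
  | succ n ih => exact (h n).1 ih
  | pred n ih => exact (h _).2 (by rwa [sub_add_cancel])

lemma shiftMap_mem_iff {X : Set (ℤ → A)} (hX : shiftMap '' X = X) {x : ℤ → A} :
    shiftMap x ∈ X ↔ x ∈ X := by
  refine ⟨fun h => ?_, fun h => hX ▸ mem_image_of_mem _ h⟩
  obtain ⟨w, hw, hwx⟩ := hX.symm ▸ h
  rwa [← shiftMap_injective hwx]

lemma shiftBy_mem {X : Set (ℤ → A)} (hX : shiftMap '' X = X) (k : ℤ) {x : ℤ → A} (hx : x ∈ X) :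
    shiftBy k x ∈ X :=
  Int.forall_of_iff_add_one (P := fun k => shiftBy k x ∈ X) (by simpa using hx)
    (fun k => by simp only [shiftBy_add_one, shiftMap_mem_iff hX]) k

lemma IsCode.map_shiftBy {X : Set (ℤ → A)} {Y : Set (ℤ → B)} {φ : (ℤ → A) → ℤ → B}
    (hφ : IsCode X Y φ) (hX : shiftMap '' X = X) (k : ℤ) {x : ℤ → A} (hx : x ∈ X) :
    φ (shiftBy k x) = shiftBy k (φ x) :=
  Int.forall_of_iff_add_one (P := fun k => φ (shiftBy k x) = shiftBy k (φ x)) (by simp)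
    (fun k => by
      rw [shiftBy_add_one, shiftBy_add_one, hφ.2.2 _ (shiftBy_mem hX k hx),
        shiftMap_injective.eq_iff]) k

end Shift

section Words

variable {A : Type*}

def window (x : ℤ → A) (i : ℤ) (n : ℕ) : List A := List.ofFn fun k : Fin n => x (i + k)

@[simp] lemma length_window (x : ℤ → A) (i : ℤ) (n : ℕ) : (window x i n).length = n := by
  simp [window]

lemma occursAt_window (x : ℤ → A) (i : ℤ) (n : ℕ) : OccursAt x (window x i n) i := fun k => by
  rw [List.get_eq_getElem]
  exact (List.getElem_ofFn (f := fun k : Fin n => x (i + k)) _).symm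

lemma OccursAt.eqOn {x y : ℤ → A} {u : List A} {i : ℤ} (hx : OccursAt x u i)
    (hy : OccursAt y u i) : EqOn x y (Ico i (i + u.length)) := fun j hj => by
  obtain ⟨k, hk, rfl⟩ : ∃ k : ℕ, k < u.length ∧ i + k = j := ⟨(j - i).toNat, by grind⟩
  rw [hx ⟨k, hk⟩, hy ⟨k, hk⟩]

lemma occursAt_append {x : ℤ → A} {u w : List A} {i : ℤ} :
    OccursAt x (u ++ w) i ↔ OccursAt x u i ∧ OccursAt x w (i + u.length) := by
  refine ⟨fun h => ⟨fun k => ?_, fun k => ?_⟩, fun ⟨hu, hw⟩ k => ?_⟩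
  · simpa [List.getElem_append_left k.2] using h ⟨k, by simp only [List.length_append]; omega⟩
  · simpa [add_assoc] using h ⟨u.length + k, by simp⟩
  · by_cases hk : (k : ℕ) < u.length
    · simpa [List.getElem_append_left hk] using hu ⟨k, hk⟩
    · have hk' : (k : ℕ) - u.length < w.length := by
        have := k.2
        simp only [List.length_append, not_lt] at this hk
        omega
      have := hw ⟨k - u.length, hk'⟩
      simp only [List.get_eq_getElem, List.getElem_append_right (Nat.le_of_not_lt hk)] at this ⊢
      rwa [show i + u.length + ((k - u.length : ℕ) : ℤ) = i + k by omega] at this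

lemma occursAt_shiftBy {x : ℤ → A} {u : List A} {i k : ℤ} :
    OccursAt (shiftBy k x) u i ↔ OccursAt x u (i + k) := by
  simp only [OccursAt, shiftBy_apply, add_right_comm]

lemma isWordOf_of_occursAt {X : Set (ℤ → A)} (hX : shiftMap '' X = X) {x : ℤ → A} (hx : x ∈ X)
    {u : List A} {i : ℤ} (h : OccursAt x u i) : IsWordOf X u :=
  ⟨shiftBy i x, shiftBy_mem hX i hx, occursAt_shiftBy.2 (by rwa [zero_add])⟩

lemma OccursAt.exists_padding {x : ℤ → A} {v : List A} {a : ℤ} (h : OccursAt x v a) (r : ℕ) :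
    ∃ u w : List A, u.length = r ∧ w.length = r ∧ OccursAt x (u ++ v ++ w) (a - r) := by
  refine ⟨window x (a - r) r, window x (a + v.length) r, length_window .., length_window ..,
    occursAt_append.2 ⟨occursAt_append.2 ⟨occursAt_window x _ _, ?_⟩, ?_⟩⟩
  · simpa using h
  · convert occursAt_window x (a + v.length) r using 1
    simp only [List.length_append, length_window, Nat.cast_add]
    ring

lemma IsWordOf.exists_append_right {X : Set (ℤ → A)} {u : List A} (hu : IsWordOf X u) (n : ℕ) :
    ∃ w : List A, w.length = n ∧ IsWordOf X (u ++ w) := by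
  obtain ⟨x, hx, hxu⟩ := hu
  exact ⟨window x u.length n, length_window .., x, hx,
    occursAt_append.2 ⟨hxu, by simpa using occursAt_window x u.length n⟩⟩

lemma IsWordOf.exists_append_left {X : Set (ℤ → A)} (hX : shiftMap '' X = X) {u : List A}
    (hu : IsWordOf X u) (n : ℕ) : ∃ w : List A, w.length = n ∧ IsWordOf X (w ++ u) := by
  obtain ⟨x, hx, hxu⟩ := hu
  exact ⟨window x (-n) n, length_window .., isWordOf_of_occursAt hX hx
    (occursAt_append.2 ⟨occursAt_window x (-n) n, by simpa using hxu⟩)⟩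

lemma IsLeftTransitive.exists_occursAt_le {X : Set (ℤ → A)} {x : ℤ → A}
    (hx : IsLeftTransitive X x) {u : List A} (hu : IsWordOf X u) (N : ℤ) :
    ∃ i : ℤ, i + u.length ≤ N ∧ OccursAt x u i := by
  obtain ⟨w, hw, huw⟩ := hu.exists_append_right (1 - N).toNat
  obtain ⟨i, hi, hocc⟩ := hx _ huw
  simp only [List.length_append, hw] at hi
  exact ⟨i, by omega, (occursAt_append.1 hocc).1⟩

lemma IsRightTransitive.exists_occursAt_ge {X : Set (ℤ → A)} (hX : shiftMap '' X = X)
    {x : ℤ → A} (hx : IsRightTransitive X x) {u : List A} (hu : IsWordOf X u) (N : ℤ) :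
    ∃ i : ℤ, N ≤ i ∧ OccursAt x u i := by
  obtain ⟨w, hw, hwu⟩ := hu.exists_append_left hX N.toNat
  obtain ⟨i, hi, hocc⟩ := hx _ hwu
  exact ⟨i + w.length, by omega, (occursAt_append.1 hocc).2⟩

end Words

section Topology

variable {A : Type*} [TopologicalSpace A] [DiscreteTopology A]

lemma isClopen_setOf_occursAt (u : List A) (i : ℤ) : IsClopen {x : ℤ → A | OccursAt x u i} := by
  have : {x : ℤ → A | OccursAt x u i} = ⋂ k : Fin u.length, (fun x => x (i + k)) ⁻¹' {u.get k} := by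
    ext; simp [OccursAt]
  rw [this]
  exact isClopen_iInter_of_finite fun k => (isClopen_discrete _).preimage (continuous_apply _)

lemma IsClosed.mem_of_forall_exists_eqOn {X : Set (ℤ → A)} (hX : IsClosed X) {q : ℤ → A} (c : ℤ)
    (h : ∀ n : ℕ, ∃ p ∈ X, EqOn p q (Icc (c - n) (c + n))) : q ∈ X := by
  choose p hpX hpq using h
  refine hX.mem_of_tendsto (b := atTop) (tendsto_pi_nhds.2 fun i => ?_) (Eventually.of_forall hpX)
  rw [nhds_discrete, tendsto_pure]
  filter_upwards [eventually_ge_atTop (i - c).natAbs] with n hn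
  exact hpq n ⟨by omega, by omega⟩

lemma IsCompact.exists_not_eqOn_Icc {S : Set ((ℤ → A) × (ℤ → A))} (hS : IsCompact S)
    (hdiag : ∀ p ∈ S, p.1 ≠ p.2) : ∃ m : ℕ, ∀ p ∈ S, ¬ EqOn p.1 p.2 (Icc (-m) m) := by
  let T : ℕ → Set ((ℤ → A) × (ℤ → A)) := fun m => {p | EqOn p.1 p.2 (Icc (-m) m)}
  have hT : ∀ m, IsClosed (T m) := fun m => by
    have : T m = ⋂ i ∈ Icc (-(m : ℤ)) m, {p | p.1 i = p.2 i} := by ext; simp [T, EqOn]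
    exact this ▸ isClosed_biInter fun i _ => isClosed_eq (by fun_prop) (by fun_prop)
  have hST : S ∩ ⋂ m, T m = ∅ := by
    refine eq_empty_of_forall_notMem fun p ⟨hp, hpT⟩ => hdiag p hp (funext fun i => ?_)
    exact mem_iInter.1 hpT i.natAbs ⟨by omega, by omega⟩
  have hanti : Antitone T := fun m n hmn p hp i hi => hp ⟨by grind, by grind⟩
  obtain ⟨m, hm⟩ := hS.elim_directed_family_closed T hT hST hanti.directed_ge
  exact ⟨m, fun p hp hpm => (eq_empty_iff_forall_notMem.1 hm) p ⟨hp, hpm⟩⟩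

end Topology

section Codes

variable {A B : Type*} {X : Set (ℤ → A)} {Y : Set (ℤ → B)} {φ : (ℤ → A) → ℤ → B}

def HasRadius (X : Set (ℤ → A)) (φ : (ℤ → A) → ℤ → B) (r : ℕ) : Prop :=
  ∀ ⦃w⦄, w ∈ X → ∀ ⦃w'⦄, w' ∈ X → ∀ i : ℤ, EqOn w w' (Icc (i - r) (i + r)) → φ w i = φ w' i

lemma IsCode.exists_hasRadius [Finite A] [Finite B] (hφ : IsCode X Y φ) (hX : IsShiftSpace X) :
    ∃ r, HasRadius X φ r := by
  -- with discrete alphabets, the product topology on `ℤ → A` is `seqTop A` by definition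
  let _ : TopologicalSpace A := ⊥
  let _ : TopologicalSpace B := ⊥
  have : DiscreteTopology A := ⟨rfl⟩
  have : DiscreteTopology B := ⟨rfl⟩
  have hXc : IsClosed X := hX.2.1
  have hφ0 : ContinuousOn (fun w => φ w 0) X := (continuous_apply 0).comp_continuousOn hφ.2.1
  let S := X ×ˢ X ∩ Prod.map (fun w => φ w 0) (fun w => φ w 0) ⁻¹' (diagonal B)ᶜ
  have hS : IsClosed S :=
    (hφ0.prodMap hφ0).preimage_isClosed_of_isClosed (hXc.prod hXc) (isClosed_discrete _)
  obtain ⟨r, hr⟩ := hS.isCompact.exists_not_eqOn_Icc fun p hp hp12 => hp.2 (by simp [hp12])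
  refine ⟨r, fun w hw w' hw' i hww' => by_contra fun hne => hr (shiftBy i w, shiftBy i w')
    ⟨⟨shiftBy_mem hX.2.2 i hw, shiftBy_mem hX.2.2 i hw'⟩, ?_⟩ fun j hj => hww' ?_⟩
  · simpa [hφ.map_shiftBy hX.2.2 i hw, hφ.map_shiftBy hX.2.2 i hw'] using hne
  · simp only [mem_Icc] at hj ⊢
    omega

lemma HasRadius.eqOn_Iio {r : ℕ} (hr : HasRadius X φ r) {w w' : ℤ → A} (hw : w ∈ X) (hw' : w' ∈ X)
    {c : ℤ} (h : EqOn w w' (Iio (c + r))) : EqOn (φ w) (φ w') (Iio c) :=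
  fun i hi => hr hw hw' i (h.mono fun j hj => by simp only [mem_Icc, mem_Iio] at hi hj ⊢; omega)

lemma HasRadius.eqOn_Ici {r : ℕ} (hr : HasRadius X φ r) {w w' : ℤ → A} (hw : w ∈ X) (hw' : w' ∈ X)
    {c : ℤ} (h : EqOn w w' (Ici (c - r))) : EqOn (φ w) (φ w') (Ici c) :=
  fun i hi => hr hw hw' i (h.mono fun j hj => by simp only [mem_Icc, mem_Ici] at hi hj ⊢; omega)

lemma IsOpenCode.exists_lift [Finite A] [Finite B] (hopen : IsOpenCode X Y φ)
    (hX : IsShiftSpace X) (hY : shiftMap '' Y = Y) (hφ : IsCode X Y φ) (u : List A) :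
    ∃ m : ℕ, ∀ t : ℤ, ∀ x ∈ X, OccursAt x u t → ∀ y ∈ Y, EqOn y (φ x) (Icc (t - m) (t + m)) →
      ∃ z ∈ X, OccursAt z u t ∧ φ z = y := by
  let _ : TopologicalSpace A := ⊥
  let _ : TopologicalSpace B := ⊥
  have : DiscreteTopology A := ⟨rfl⟩
  have : DiscreteTopology B := ⟨rfl⟩
  have hXc : IsClosed X := hX.2.1
  have hφc : ContinuousOn φ X := hφ.2.1
  let C := {x : ℤ → A | OccursAt x u 0}
  obtain ⟨V, hV, hCV⟩ := hopen C (isClopen_setOf_occursAt u 0).isOpen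
  replace hV : IsOpen V := hV
  have hK : IsCompact (φ '' (X ∩ C)) :=
    (hXc.inter (isClopen_setOf_occursAt u 0).isClosed).isCompact.image_of_continuousOn
      (hφc.mono inter_subset_left)
  -- points of `Vᶜ` stay a definite distance away from the compact set `φ '' (X ∩ C) ⊆ V`
  obtain ⟨m, hm⟩ := (hV.isClosed_compl.isCompact.prod hK).exists_not_eqOn_Icc
    fun p hp hp12 => hp.1 (hp12 ▸ (hCV.subset hp.2).2)
  refine ⟨m, fun t x hx hxu y hy hyx => ?_⟩
  have hy' : shiftBy t y ∈ φ '' (X ∩ C) := by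
    refine hCV ▸ ⟨shiftBy_mem hY t hy, by_contra fun hyV => hm (_, φ (shiftBy t x))
      ⟨hyV, mem_image_of_mem _ ⟨shiftBy_mem hX.2.2 t hx, ?_⟩⟩ fun i hi => ?_⟩
    · exact occursAt_shiftBy.2 (by rwa [zero_add])
    · rw [hφ.map_shiftBy hX.2.2 t hx]
      exact hyx (by simp only [mem_Icc] at hi ⊢; omega)
  obtain ⟨z, ⟨hz, hzu⟩, hzy⟩ := hy'
  refine ⟨shiftBy (-t) z, shiftBy_mem hX.2.2 _ hz, occursAt_shiftBy.2 (by rwa [add_neg_cancel]), ?_⟩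
  rw [hφ.map_shiftBy hX.2.2 _ hz, hzy, shiftBy_shiftBy, neg_add_cancel, shiftBy_zero]

end Codes

section Synchronizing

variable {A B : Type*} {X : Set (ℤ → A)} {v : List A} {x z : ℤ → A} {α : ℤ}

lemma IsSynchronizingWord.exists_eqOn_Ico (hv : IsSynchronizingWord X v)
    (hX : shiftMap '' X = X) (hx : x ∈ X) (hz : z ∈ X) (hxv : OccursAt x v α)
    (hzv : OccursAt z v α) (n : ℕ) :
    ∃ p ∈ X, EqOn p x (Ico (α - n) (α + v.length)) ∧ EqOn p z (Ico α (α + v.length + n)) := by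
  set u := window x (α - n) n
  set w := window z (α + v.length) n
  have hxu : OccursAt x (u ++ v) (α - n) :=
    occursAt_append.2 ⟨occursAt_window _ _ _, by rwa [length_window, sub_add_cancel]⟩
  have hzw : OccursAt z (v ++ w) α := occursAt_append.2 ⟨hzv, occursAt_window _ _ _⟩
  obtain ⟨ξ, hξ, huvw⟩ :=
    hv.2 u w (isWordOf_of_occursAt hX hx hxu) (isWordOf_of_occursAt hX hz hzw)
  have hp : OccursAt (shiftBy (n - α) ξ) (u ++ v ++ w) (α - n) :=
    occursAt_shiftBy.2 (by rwa [sub_add_sub_cancel', sub_self])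
  refine ⟨shiftBy (n - α) ξ, shiftBy_mem hX _ hξ, ?_, ?_⟩
  · convert (occursAt_append.1 hp).1.eqOn hxu using 2
    simp only [List.length_append, length_window, Nat.cast_add, u]
    ring
  · rw [List.append_assoc, occursAt_append, length_window, sub_add_cancel] at hp
    convert hp.2.eqOn hzw using 2
    simp [w, add_assoc]

lemma IsSynchronizingWord.exists_splice (hv : IsSynchronizingWord X v) (hX : IsShiftSpace X)
    (hx : x ∈ X) (hz : z ∈ X) (hxv : OccursAt x v α) (hzv : OccursAt z v α) :
    ∃ p ∈ X, EqOn p x (Iio (α + v.length)) ∧ EqOn p z (Ici α) := by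
  let _ : TopologicalSpace A := ⊥
  have : DiscreteTopology A := ⟨rfl⟩
  have hXc : IsClosed X := hX.2.1
  have hxz : EqOn x z (Ico α (α + v.length)) := hxv.eqOn hzv
  let q : ℤ → A := fun i => if i < α + v.length then x i else z i
  have hqx : EqOn q x (Iio (α + v.length)) := fun i hi => if_pos hi
  have hqz : EqOn q z (Ici α) := fun i hi => by
    by_cases h : i < α + v.length
    · exact (if_pos h).trans (hxz ⟨hi, h⟩)
    · exact if_neg h
  refine ⟨q, hXc.mem_of_forall_exists_eqOn α fun n => ?_, hqx, hqz⟩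
  obtain ⟨p, hp, hpx, hpz⟩ := hv.exists_eqOn_Ico hX.2.2 hx hz hxv hzv (n + 1)
  refine ⟨p, hp, fun i hi => ?_⟩
  simp only [mem_Icc] at hi
  by_cases h : i < α + v.length
  · exact (hpx ⟨by omega, h⟩).trans (hqx h).symm
  · exact (hpz ⟨by omega, by omega⟩).trans (hqz (show α ≤ i by omega)).symm

lemma IsSynchronizingWord.exists_glue {φ : (ℤ → A) → ℤ → B} {r : ℕ} (hv : IsSynchronizingWord X v)
    (hX : IsShiftSpace X) (hr : HasRadius X φ r) {u w : List A} (hu : r ≤ u.length)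
    (hw : r ≤ w.length) (hx : x ∈ X) (hz : z ∈ X) {t : ℤ} (hxP : OccursAt x (u ++ v ++ w) t)
    (hzP : OccursAt z (u ++ v ++ w) t) :
    ∃ p ∈ X, EqOn p x (Iio (t + u.length)) ∧ EqOn p z (Ici (t + u.length)) ∧
      EqOn (φ p) (φ x) (Iio (t + u.length)) ∧ EqOn (φ p) (φ z) (Ici (t + u.length)) := by
  have hxz : EqOn x z (Ico t (t + (u ++ v ++ w).length)) := hxP.eqOn hzP
  have hxv := (occursAt_append.1 (occursAt_append.1 hxP).1).2
  have hzv := (occursAt_append.1 (occursAt_append.1 hzP).1).2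
  obtain ⟨p, hp, hpx, hpz⟩ := hv.exists_splice hX hx hz hxv hzv
  have hpx' : EqOn p x (Iio (t + u.length + r)) := fun i hi => by
    by_cases h : i < t + u.length + v.length
    · exact hpx h
    · simp only [mem_Iio, List.length_append] at hi hxz
      exact (hpz (show t + u.length ≤ i by omega)).trans (hxz ⟨by omega, by omega⟩).symm
  have hpz' : EqOn p z (Ici (t + u.length - r)) := fun i hi => by
    by_cases h : t + u.length ≤ i
    · exact hpz h
    · simp only [mem_Ici, List.length_append] at hi hxz
      exact (hpx (show i < t + u.length + v.length by omega)).trans (hxz ⟨by omega, by omega⟩)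
  exact ⟨p, hp, hpx'.mono fun i (hi : i < _) => show i < _ by omega, hpz,
    hr.eqOn_Iio hp hx hpx', hr.eqOn_Ici hp hz hpz'⟩

end Synchronizing

section Continuing

variable {A B : Type*} [Finite A] [Finite B] {X : Set (ℤ → A)} {Y : Set (ℤ → B)}
  {φ : (ℤ → A) → ℤ → B} {v : List A}

lemma IsOpenCode.isRightContinuingAE (hopen : IsOpenCode X Y φ) (hX : IsShiftSpace X)
    (hY : shiftMap '' Y = Y) (hφ : IsCode X Y φ) (hv : IsSynchronizingWord X v) :
    IsRightContinuingAE X Y φ := by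
  obtain ⟨r, hr⟩ := hφ.exists_hasRadius hX
  rintro x hx hxt y hy ⟨M, hM⟩
  obtain ⟨a, -, hva⟩ := hxt v hv.1
  obtain ⟨u, w, hu, hw, hxP⟩ := hva.exists_padding r
  obtain ⟨m, hm⟩ := hopen.exists_lift hX hY hφ (u ++ v ++ w)
  obtain ⟨t, ht, hxP'⟩ := hxt.exists_occursAt_le (isWordOf_of_occursAt hX.2.2 hx hxP) (M - m)
  simp only [List.length_append] at ht
  obtain ⟨z, hz, hzP, rfl⟩ := hm t x hx hxP' y hy fun i hi => (hM i (by have := hi.2; omega)).symm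
  obtain ⟨p, hp, hpx, -, hφx, hφz⟩ := hv.exists_glue hX hr hu.ge hw.ge hx hz hxP' hzP
  refine ⟨p, hp, ⟨t + u.length - 1, fun i hi => hpx (show i < _ by omega)⟩, funext fun i => ?_⟩
  rcases lt_or_ge i (t + u.length) with hi | hi
  · exact (hφx hi).trans (hM i (by omega))
  · exact hφz hi

lemma IsOpenCode.isLeftContinuingAE (hopen : IsOpenCode X Y φ) (hX : IsShiftSpace X)
    (hY : shiftMap '' Y = Y) (hφ : IsCode X Y φ) (hv : IsSynchronizingWord X v) :
    IsLeftContinuingAE X Y φ := by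
  obtain ⟨r, hr⟩ := hφ.exists_hasRadius hX
  rintro x hx hxt y hy ⟨M, hM⟩
  obtain ⟨a, -, hva⟩ := hxt v hv.1
  obtain ⟨u, w, hu, hw, hxP⟩ := hva.exists_padding r
  obtain ⟨m, hm⟩ := hopen.exists_lift hX hY hφ (u ++ v ++ w)
  obtain ⟨t, ht, hxP'⟩ :=
    hxt.exists_occursAt_ge hX.2.2 (isWordOf_of_occursAt hX.2.2 hx hxP) (M + m)
  obtain ⟨z, hz, hzP, rfl⟩ := hm t x hx hxP' y hy fun i hi => (hM i (by have := hi.1; omega)).symm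
  obtain ⟨p, hp, -, hpx, hφz, hφx⟩ := hv.exists_glue hX hr hu.ge hw.ge hz hx hzP hxP'
  refine ⟨p, hp, ⟨t + u.length, fun i hi => hpx hi⟩, funext fun i => ?_⟩
  rcases lt_or_ge i (t + u.length) with hi | hi
  · exact hφz hi
  · exact (hφx hi).trans (hM i (by omega))

end Continuing

/-- An open code from a synchronized system is
bi-continuing almost everywhere. -/
theorem open_from_synchronized_is_bicontinuing_ae
    {A B : Type*} [Fintype A] [Fintype B]
    (X : Set (ℤ → A)) (Y : Set (ℤ → B)) (φ : (ℤ → A) → (ℤ → B))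
    (hX : IsShiftSpace X) (hsync : IsSynchronizedSystem X)
    (hY : IsShiftSpace Y) (hφ : IsCode X Y φ) (hopen : IsOpenCode X Y φ) :
    IsRightContinuingAE X Y φ ∧ IsLeftContinuingAE X Y φ := by
  obtain ⟨-, v, hv⟩ := hsync
  exact ⟨hopen.isRightContinuingAE hX hY.2.2 hφ hv, hopen.isLeftContinuingAE hX hY.2.2 hφ hv⟩
end

section
/- Let S be a nonempty subset of the nonnegative integers and X(S) the S-gap shift. Then X(S) is almost specified if and only if the gaps between consecutive elements of S are bounded, i.e., there exists L such that for every s ∈ S that is not the maximum of S there exists t ∈ S with s < t ≤ s + L. -/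
open Set Filter

/-!
`X(S)` is the closure of the concatenations of blocks `1 0^s`, so its words are theirs, and a
concatenation is described by the positions of its `1`s, consecutive ones lying `s + 1` apart
with `s ∈ S`.

If every pair of words can be joined by at most `N` symbols, join `1 0^(s+1)` (a word as soon as
some element of `S` exceeds `s`) to itself: the gap following the first `1` is an element of `S`
in `(s, s + N + 1]`.

Conversely, if the gaps of `S` are at most `L`, every `b` lying below some element of `S` lies at
most `K = max (min S) L` below one. Hence a point can be altered after an occurrence of `u` so
that a `1` follows within `K` symbols, and before an occurrence of `v` so that a `1` precedes it
within `K + 1`; cutting the first point at its `1` and continuing with the second one from its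
`1` yields a point of the same kind in which `u` and `v` are at most `2 K + 1` apart.
-/

section Words

variable {A : Type*}

theorem occursAt_iff {x : ℤ → A} {u : List A} {i : ℤ} :
    OccursAt x u i ↔ ∀ k (hk : k < u.length), x (i + k) = u[k] :=
  ⟨fun h k hk => h ⟨k, hk⟩, fun h k => h k k.isLt⟩

theorem OccursAt.congr {x y : ℤ → A} {u : List A} {i j : ℤ} (h : OccursAt x u i)
    (hxy : ∀ k : ℕ, k < u.length → y (j + k) = x (i + k)) : OccursAt y u j :=
  fun k => (hxy k k.isLt).trans (h k)

theorem occursAt_append_iff {x : ℤ → A} {u v : List A} {i : ℤ} :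
    OccursAt x (u ++ v) i ↔ OccursAt x u i ∧ OccursAt x v (i + u.length) := by
  simp only [occursAt_iff, List.length_append]
  refine ⟨fun h => ⟨fun k hk => ?_, fun k hk => ?_⟩, fun ⟨hu, hv⟩ k hk => ?_⟩
  · rw [h k (by omega), List.getElem_append_left hk]
  · rw [add_assoc, ← Nat.cast_add, h _ (by omega), List.getElem_append_right (by omega)]
    simp
  · rcases lt_or_ge k u.length with hku | hku
    · rw [hu k hku, List.getElem_append_left hku]
    · rw [List.getElem_append_right hku, ← hv (k - u.length) (by omega)]
      congr 1
      omega

theorem occursAt_cons_replicate_iff {x : ℤ → A} {a b : A} {n : ℕ} {i : ℤ} :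
    OccursAt x (a :: List.replicate n b) i ↔ x i = a ∧ ∀ k, i < k → k ≤ i + n → x k = b := by
  simp only [occursAt_iff, List.length_cons, List.length_replicate]
  refine ⟨fun h => ⟨by simpa using h 0 (by omega), fun k hk hk' => ?_⟩, fun ⟨h0, h⟩ k hk => ?_⟩
  · obtain ⟨j, rfl⟩ : ∃ j : ℕ, k = i + (j + 1 : ℕ) := ⟨(k - i - 1).toNat, by omega⟩
    simpa using h (j + 1) (by omega)
  · rcases k with _ | j
    · simpa using h0
    · simpa using h _ (by omega) (by omega)

theorem exists_occursAt_append_append {z : ℤ → A} {u v : List A} {i : ℤ} {d : ℕ}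
    (hu : OccursAt z u i) (hv : OccursAt z v (i + u.length + d)) :
    ∃ w : List A, w.length = d ∧ OccursAt z (u ++ w ++ v) i := by
  refine ⟨List.ofFn fun k : Fin d => z (i + u.length + k), List.length_ofFn, ?_⟩
  refine occursAt_append_iff.2 ⟨occursAt_append_iff.2 ⟨hu, fun k => ?_⟩, ?_⟩
  · simp
  · simpa [add_assoc] using hv

end Words

section Topology

variable {A : Type*}

theorem isHomeomorph_shiftMap : @IsHomeomorph _ _ (seqTop A) (seqTop A) shiftMap := by
  let : TopologicalSpace A := ⊥
  refine isHomeomorph_iff_exists_inverse.2 ⟨continuous_pi fun i => continuous_apply (i + 1),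
    fun x i => x (i - 1), fun x => ?_, fun x => ?_, continuous_pi fun i => continuous_apply _⟩
  all_goals funext i; simp [shiftMap]

theorem isOpen_setOf_occursAt (u : List A) (i : ℤ) :
    @IsOpen _ (seqTop A) {x | OccursAt x u i} := by
  let : TopologicalSpace A := ⊥
  have : DiscreteTopology A := ⟨rfl⟩
  have : {x : ℤ → A | OccursAt x u i} = ⋂ k : Fin u.length, (· (i + k)) ⁻¹' {u.get k} := by
    ext
    simp [OccursAt]
  rw [this]
  exact isOpen_iInter_of_finite fun k => (continuous_apply _).isOpen_preimage _ (isOpen_discrete _)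

theorem isWordOf_closure_iff {Y : Set (ℤ → A)} {u : List A} :
    IsWordOf (@closure _ (seqTop A) Y) u ↔ IsWordOf Y u := by
  let := seqTop A
  refine ⟨fun ⟨x, hx, hxu⟩ => ?_, fun ⟨y, hy, hyu⟩ => ⟨y, subset_closure hy, hyu⟩⟩
  obtain ⟨y, hyu, hy⟩ := mem_closure_iff.1 hx _ (isOpen_setOf_occursAt u 0) hxu
  exact ⟨y, hy, hyu⟩

theorem isWordOf_sInter_shiftSpaces_iff {Y : Set (ℤ → A)} (hne : Y.Nonempty)
    (hY : shiftMap '' Y = Y) {u : List A} :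
    IsWordOf (⋂₀ {X | IsShiftSpace X ∧ Y ⊆ X}) u ↔ IsWordOf Y u := by
  let := seqTop A
  have hcl : IsShiftSpace (closure Y) :=
    ⟨hne.closure, isClosed_closure, by rw [isHomeomorph_shiftMap.image_closure, hY]⟩
  exact ⟨fun ⟨x, hx, hxu⟩ => isWordOf_closure_iff.1 ⟨x, hx _ ⟨hcl, subset_closure⟩, hxu⟩,
    fun ⟨y, hy, hyu⟩ => ⟨y, fun X hX => hX.2 hy, hyu⟩⟩

end Topology

theorem StrictMono.add_sub_le_int {t : ℤ → ℤ} (ht : StrictMono t) {n m : ℤ} (hnm : n ≤ m) :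
    t n + (m - n) ≤ t m := by
  induction m, hnm using Int.leInduction with
  | base => simp
  | succ m hnm ih => have := ht (lt_add_one m); omega

theorem StrictMono.exists_apply_lt_le_apply_succ {t : ℤ → ℤ} (ht : StrictMono t) (c : ℤ) :
    ∃ n, t n < c ∧ c ≤ t (n + 1) := by
  have hbdd : ∃ b, ∀ n, t n < c → n ≤ b := ⟨max 0 (c - t 0), fun n hn => by
    rcases le_or_gt n 0 with h | h
    · have := ht.add_sub_le_int h
      omega
    · have := ht.add_sub_le_int h.le
      omega⟩
  have hne : ∃ n, t n < c := ⟨min 0 (c - t 0 - 1), by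
    have := ht.add_sub_le_int (min_le_left 0 (c - t 0 - 1))
    omega⟩
  obtain ⟨n, hn, hmax⟩ := Int.exists_greatest_of_bdd hbdd hne
  exact ⟨n, hn, not_lt.1 fun h => by have := hmax _ h; omega⟩

section GapShift

variable {S : Set ℕ} {x y : ℤ → Bool}

theorem strictMono_of_gaps {t : ℤ → ℤ} (h : ∀ n, ∃ s ∈ S, t (n + 1) = t n + s + 1) :
    StrictMono t :=
  strictMono_int_of_lt_succ fun n => by
    obtain ⟨s, -, hs⟩ := h n
    omega

theorem translate_mem_gapConcat (hx : x ∈ GapConcat S) (c : ℤ) :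
    (fun i => x (i + c)) ∈ GapConcat S := by
  obtain ⟨t, ht, hgap, hone⟩ := hx
  refine ⟨fun n => t n - c, fun a b hab => by simpa using ht hab, fun n => ?_, fun i => ?_⟩
  · obtain ⟨s, hs, e⟩ := hgap n
    exact ⟨s, hs, by dsimp only; omega⟩
  · simp only [hone, sub_eq_iff_eq_add]

theorem shiftMap_image_gapConcat : shiftMap '' GapConcat S = GapConcat S := by
  refine Subset.antisymm (image_subset_iff.2 fun x hx => translate_mem_gapConcat hx 1)
    fun x hx => ⟨_, translate_mem_gapConcat hx (-1), ?_⟩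
  funext i
  simp [shiftMap]

def IsGapAt (x : ℤ → Bool) (i : ℤ) (s : ℕ) : Prop :=
  x i = true ∧ x (i + s + 1) = true ∧ ∀ k, i < k → k ≤ i + s → x k = false

theorem GapConcat.exists_isGapAt_straddling (hx : x ∈ GapConcat S) (c : ℤ) :
    ∃ i < c, ∃ s ∈ S, c ≤ i + s + 1 ∧ IsGapAt x i s := by
  obtain ⟨t, ht, hgap, hone⟩ := hx
  obtain ⟨n, hn, hcn⟩ := ht.exists_apply_lt_le_apply_succ c
  obtain ⟨s, hs, e⟩ := hgap n
  refine ⟨t n, hn, s, hs, by omega, (hone _).2 ⟨n, rfl⟩, (hone _).2 ⟨n + 1, by omega⟩,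
    fun k hk hk' => ?_⟩
  rw [← Bool.not_eq_true, hone]
  rintro ⟨m, rfl⟩
  have h1 := ht.lt_iff_lt.1 hk
  have h2 := ht.lt_iff_lt.1 (show t m < t (n + 1) by omega)
  omega

theorem GapConcat.exists_isGapAt (hx : x ∈ GapConcat S) {i : ℤ} (hi : x i = true) :
    ∃ s ∈ S, IsGapAt x i s := by
  obtain ⟨j, hj, s, hs, hij, hgap⟩ := GapConcat.exists_isGapAt_straddling hx (i + 1)
  obtain rfl : j = i := by
    by_contra hne
    have := hgap.2.2 i (by omega) (by omega)
    simp_all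
  exact ⟨s, hs, hgap⟩

def periodicPoint (s : ℕ) (c : ℤ) : ℤ → Bool := fun i => decide ((s + 1 : ℤ) ∣ i - c)

theorem periodicPoint_mem_gapConcat {s : ℕ} (hs : s ∈ S) (c : ℤ) :
    periodicPoint s c ∈ GapConcat S := by
  refine ⟨fun n => c + n * (s + 1), strictMono_of_gaps fun n => ⟨s, hs, by ring⟩,
    fun n => ⟨s, hs, by ring⟩, fun i => ?_⟩
  simp only [periodicPoint, decide_eq_true_eq]
  constructor
  · rintro ⟨n, hn⟩
    exact ⟨n, by linarith⟩
  · rintro ⟨n, rfl⟩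
    exact ⟨n, by ring⟩

theorem periodicPoint_isGapAt {s : ℕ} {c i : ℤ} (hi : (s + 1 : ℤ) ∣ i - c) :
    IsGapAt (periodicPoint s c) i s := by
  simp only [IsGapAt, periodicPoint, decide_eq_true_eq, decide_eq_false_iff_not]
  refine ⟨hi, ?_, fun k hik hki hdvd => ?_⟩
  · rw [show i + s + 1 - c = i - c + (s + 1) by ring]
    exact dvd_add hi dvd_rfl
  · have := Int.le_of_dvd (by omega) (show (s + 1 : ℤ) ∣ k - i by simpa using dvd_sub hdvd hi)
    omega

def splice (x y : ℤ → Bool) (p q : ℤ) : ℤ → Bool :=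
  fun i => if i ≤ p then x i else y (i - p + q)

theorem splice_of_le {p q i : ℤ} (hi : i ≤ p) : splice x y p q i = x i := if_pos hi

theorem splice_of_lt {p q i : ℤ} (hi : p < i) : splice x y p q i = y (i - p + q) :=
  if_neg (not_le.2 hi)

theorem splice_mem_gapConcat (hx : x ∈ GapConcat S) (hy : y ∈ GapConcat S) {p q : ℤ}
    (hxp : x p = true) (hyq : y q = true) : splice x y p q ∈ GapConcat S := by
  obtain ⟨tx, htx, hgx, hix⟩ := hx
  obtain ⟨ty, hty, hgy, hiy⟩ := hy
  obtain ⟨a, rfl⟩ := (hix p).1 hxp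
  obtain ⟨b, rfl⟩ := (hiy q).1 hyq
  set t : ℤ → ℤ := fun n => if n ≤ a then tx n else ty (n - a + b) - ty b + tx a
  have ht_le : ∀ n ≤ a, t n = tx n := fun n hn => if_pos hn
  have ht_ge : ∀ n, a ≤ n → t n = ty (n - a + b) - ty b + tx a := by
    intro n hn
    rcases hn.lt_or_eq with h | rfl
    · exact if_neg (not_le.2 h)
    · simp [t]
  have hgaps : ∀ n, ∃ s ∈ S, t (n + 1) = t n + s + 1 := by
    intro n
    rcases lt_or_ge n a with h | h
    · obtain ⟨s, hs, e⟩ := hgx n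
      exact ⟨s, hs, by rw [ht_le n h.le, ht_le (n + 1) h, e]⟩
    · obtain ⟨s, hs, e⟩ := hgy (n - a + b)
      refine ⟨s, hs, ?_⟩
      rw [ht_ge n h, ht_ge (n + 1) (by omega), show n + 1 - a + b = n - a + b + 1 by ring, e]
      ring
  have ht := strictMono_of_gaps hgaps
  refine ⟨t, ht, hgaps, fun i => ?_⟩
  have hta : t a = tx a := ht_le a le_rfl
  rcases le_or_gt i (tx a) with hi | hi
  · rw [splice_of_le hi, hix]
    constructor
    · rintro ⟨n, rfl⟩
      exact ⟨n, ht_le n (htx.le_iff_le.1 hi)⟩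
    · rintro ⟨n, rfl⟩
      exact ⟨n, (ht_le n (ht.le_iff_le.1 (hta ▸ hi))).symm⟩
  · rw [splice_of_lt hi, hiy]
    constructor
    · rintro ⟨m, hm⟩
      have : b < m := hty.lt_iff_lt.1 (by omega)
      exact ⟨m - b + a, by rw [ht_ge _ (by omega)]; simp [hm]⟩
    · rintro ⟨n, rfl⟩
      have : a < n := ht.lt_iff_lt.1 (hta ▸ hi)
      exact ⟨n - a + b, by rw [ht_ge n this.le]; ring⟩

theorem gapConcat_nonempty (hS : S.Nonempty) : (GapConcat S).Nonempty :=
  ⟨_, periodicPoint_mem_gapConcat hS.some_mem 0⟩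

theorem isWordOf_sGapShift_iff (hS : S.Nonempty) {u : List Bool} :
    IsWordOf (SGapShift S) u ↔ IsWordOf (GapConcat S) u :=
  isWordOf_sInter_shiftSpaces_iff (gapConcat_nonempty hS) shiftMap_image_gapConcat

theorem exists_mem_le_add_of_bounded_gaps (hS : S.Nonempty) {L : ℕ}
    (hL : ∀ s ∈ S, (∃ t ∈ S, s < t) → ∃ t ∈ S, s < t ∧ t ≤ s + L) {b : ℕ}
    (hb : ∃ s ∈ S, b ≤ s) :
    ∃ g ∈ S, b ≤ g ∧ g ≤ b + max (sInf S) L := by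
  by_cases hbS : b ≤ sInf S
  · exact ⟨sInf S, Nat.sInf_mem hS, hbS, by omega⟩
  -- the successor in `S` of the largest element of `S` below `b`
  set T := {s ∈ S | s < b}
  have hT : BddAbove T := ⟨b, fun s hs => hs.2.le⟩
  have hmem : sSup T ∈ T := Nat.sSup_mem ⟨sInf S, Nat.sInf_mem hS, not_le.1 hbS⟩ hT
  obtain ⟨s, hs, hbs⟩ := hb
  obtain ⟨g, hg, hlt, hle⟩ := hL _ hmem.1 ⟨s, hs, hmem.2.trans_le hbs⟩
  have hbg : b ≤ g := not_lt.1 fun hgb => (le_csSup hT ⟨hg, hgb⟩).not_gt hlt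
  exact ⟨g, hg, hbg, by have := hmem.2; omega⟩

theorem exists_one_near_right {K : ℕ}
    (hfill : ∀ b : ℕ, (∃ s ∈ S, b ≤ s) → ∃ g ∈ S, b ≤ g ∧ g ≤ b + K)
    (hx : x ∈ GapConcat S) (c : ℤ) :
    ∃ x' ∈ GapConcat S, EqOn x' x (Iio c) ∧ ∃ P, c ≤ P ∧ P ≤ c + K ∧ x' P = true := by
  obtain ⟨i, hic, s, hs, hci, hgap⟩ := GapConcat.exists_isGapAt_straddling hx c
  obtain ⟨g, hg, hbg, hgb⟩ := hfill (c - 1 - i).toNat ⟨s, hs, by omega⟩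
  have hper : IsGapAt (periodicPoint g i) i g := periodicPoint_isGapAt (by simp)
  refine ⟨splice x (periodicPoint g i) i i,
    splice_mem_gapConcat hx (periodicPoint_mem_gapConcat hg i) hgap.1 hper.1,
    fun k hk => ?_, i + g + 1, by omega, by omega, ?_⟩
  · rcases le_or_gt k i with h | h
    · exact splice_of_le h
    · rw [splice_of_lt h, sub_add_cancel, hgap.2.2 k h (by simp at hk; omega)]
      exact hper.2.2 k h (by simp at hk; omega)
  · rw [splice_of_lt (by omega), sub_add_cancel]
    exact hper.2.1

theorem exists_one_near_left {K : ℕ}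
    (hfill : ∀ b : ℕ, (∃ s ∈ S, b ≤ s) → ∃ g ∈ S, b ≤ g ∧ g ≤ b + K)
    (hy : y ∈ GapConcat S) (c : ℤ) :
    ∃ y' ∈ GapConcat S, EqOn y' y (Ici c) ∧ ∃ Q, c ≤ Q + K + 1 ∧ Q < c ∧ y' Q = true := by
  obtain ⟨i, hic, s, hs, hci, hgap⟩ := GapConcat.exists_isGapAt_straddling hy c
  set j := i + s + 1
  obtain ⟨g, hg, hbg, hgb⟩ := hfill (j - c).toNat ⟨s, hs, by omega⟩
  have hper : IsGapAt (periodicPoint g j) (j - g - 1) g := periodicPoint_isGapAt ⟨-1, by ring⟩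
  refine ⟨splice (periodicPoint g j) y j j,
    splice_mem_gapConcat (periodicPoint_mem_gapConcat hg j) hy (by simp [periodicPoint])
      hgap.2.1,
    fun k hk => ?_, j - g - 1, by omega, by omega, ?_⟩
  · simp only [mem_Ici] at hk
    rcases lt_trichotomy k j with h | rfl | h
    · rw [splice_of_le h.le, hgap.2.2 k (by omega) (by omega)]
      exact hper.2.2 k (by omega) (by omega)
    · rw [splice_of_le le_rfl, hgap.2.1]
      simp [periodicPoint]
    · rw [splice_of_lt h, sub_add_cancel]
  · rw [splice_of_le (by omega)]
    exact hper.1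

theorem exists_gapConcat_occursAt_of_isWordOf {K : ℕ}
    (hfill : ∀ b : ℕ, (∃ s ∈ S, b ≤ s) → ∃ g ∈ S, b ≤ g ∧ g ≤ b + K) {u v : List Bool}
    (hu : IsWordOf (GapConcat S) u) (hv : IsWordOf (GapConcat S) v) :
    ∃ z ∈ GapConcat S, ∃ d ≤ 2 * K + 1, OccursAt z u 0 ∧ OccursAt z v (u.length + d) := by
  obtain ⟨x, hx, hxu⟩ := hu
  obtain ⟨y, hy, hyv⟩ := hv
  obtain ⟨x', hx', hxx', P, hP, hPK, hx'P⟩ := exists_one_near_right hfill hx u.length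
  obtain ⟨y', hy', hyy', Q, hQK, hQ, hy'Q⟩ := exists_one_near_left hfill hy 0
  refine ⟨splice x' y' P Q, splice_mem_gapConcat hx' hy' hx'P hy'Q, (P - Q - u.length).toNat,
    by omega, hxu.congr fun k hk => ?_, hyv.congr fun k hk => ?_⟩
  · rw [splice_of_le (by omega)]
    exact hxx' (show (0 + k : ℤ) < u.length by omega)
  · rw [splice_of_lt (by omega), ← hyy' (show (0 : ℤ) ≤ 0 + k by omega)]
    congr 1
    omega

theorem almostSpecified_sGapShift_of_bounded_gaps (hS : S.Nonempty) {L : ℕ}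
    (hL : ∀ s ∈ S, (∃ t ∈ S, s < t) → ∃ t ∈ S, s < t ∧ t ≤ s + L) :
    AlmostSpecified (SGapShift S) := by
  refine ⟨2 * max (sInf S) L + 1, fun u v hu hv => ?_⟩
  obtain ⟨z, hz, d, hd, hzu, hzv⟩ := exists_gapConcat_occursAt_of_isWordOf
    (fun b hb => exists_mem_le_add_of_bounded_gaps hS hL hb)
    ((isWordOf_sGapShift_iff hS).1 hu) ((isWordOf_sGapShift_iff hS).1 hv)
  obtain ⟨w, rfl, hw⟩ := exists_occursAt_append_append hzu (by simpa using hzv)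
  exact ⟨w, hd, (isWordOf_sGapShift_iff hS).2 ⟨z, hz, hw⟩⟩

theorem bounded_gaps_of_almostSpecified_sGapShift (hS : S.Nonempty)
    (h : AlmostSpecified (SGapShift S)) :
    ∃ L : ℕ, ∀ s ∈ S, (∃ t ∈ S, s < t) → ∃ t ∈ S, s < t ∧ t ≤ s + L := by
  obtain ⟨N, hN⟩ := h
  obtain ⟨m, hm⟩ := hS
  refine ⟨N + 1, fun s hs ⟨r, hr, hsr⟩ => ?_⟩
  -- `1 0^(s+1)` is a word: it begins the block `1 0^r`
  have hu : IsWordOf (SGapShift S) (true :: List.replicate (s + 1) false) := by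
    refine (isWordOf_sGapShift_iff ⟨m, hm⟩).2
      ⟨splice (periodicPoint m 0) (periodicPoint r 0) 0 0,
      splice_mem_gapConcat (periodicPoint_mem_gapConcat hm 0) (periodicPoint_mem_gapConcat hr 0)
        (by simp [periodicPoint]) (by simp [periodicPoint]),
      occursAt_cons_replicate_iff.2 ⟨?_, fun k hk hk' => ?_⟩⟩
    · rw [splice_of_le le_rfl]
      simp [periodicPoint]
    · rw [splice_of_lt hk]
      exact (periodicPoint_isGapAt (i := 0) (by simp)).2.2 _ (by omega) (by omega)
  obtain ⟨w, hw, hword⟩ := hN _ _ hu hu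
  obtain ⟨z, hz, hocc⟩ := (isWordOf_sGapShift_iff ⟨m, hm⟩).1 hword
  simp only [occursAt_append_iff, occursAt_cons_replicate_iff] at hocc
  obtain ⟨⟨⟨h0, hzero⟩, -⟩, hE, -⟩ := hocc
  obtain ⟨s', hs', -, hnext, hgap⟩ := GapConcat.exists_isGapAt hz h0
  refine ⟨s', hs', not_le.1 fun hs's => ?_, not_lt.1 fun hlt => ?_⟩
  · have := hzero (0 + s' + 1) (by omega) (by simp; omega)
    simp_all
  · have := hgap (s + 1 + w.length + 1) (by omega) (by omega)
    simp_all

end GapShift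

/-- The `S`-gap shift is almost specified iff the gaps
between consecutive elements of `S` are bounded. -/
theorem sGapShift_almostSpecified_iff_bounded_gaps
    (S : Set ℕ) (hS : S.Nonempty) :
    AlmostSpecified (SGapShift S) ↔
      ∃ L : ℕ, ∀ s ∈ S, (∃ t ∈ S, s < t) → ∃ t ∈ S, s < t ∧ t ≤ s + L :=
  ⟨bounded_gaps_of_almostSpecified_sGapShift hS,
    fun ⟨_, hL⟩ => almostSpecified_sGapShift_of_bounded_gaps hS hL⟩
end
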